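/- Let L : ℝ × ℝ → [0, +∞] be defined by L(x,y) = y²/x if x > 0, L(0,0) = 0, and L(x,y) = +∞ otherwise, and let Θ : [0,∞) × [0,∞) → [0,∞) be concave. Then the map (a, b, y) ↦ L(Θ(a,b), y) is convex on [0,∞) × [0,∞) × ℝ (with values in [0,+∞]). In particular, for the probability weight θ_ij(ρ) = (ρ_i + ρ_j)/2, the action integrand (ρ, m) ↦ ∑_{(i,j)∈E} L(θ_ij(ρ), m_ij) is a convex function of (ρ, m) on {ρ ∈ ℝ^N : ρ_i ≥ 0} × ℝ^{N×N}. -/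

import Mathlib

open scoped ENNReal BigOperators

noncomputable section

/-- The cost function `L : ℝ × ℝ → [0,∞]`, `L(x,y) = y²/x` for `x > 0`,
`L(0,0) = 0`, and `L(x,y) = ∞` otherwise. -/
def Lcost (x y : ℝ) : ℝ≥0∞ :=
  if 0 < x then ENNReal.ofReal (y ^ 2 / x)
  else if x = 0 ∧ y = 0 then 0 else ⊤

/-- Density-dependent edge weight `θ_ij(ρ) = (ρ_i + ρ_j)/2`. -/
def thetaA {N : ℕ} (ρ : Fin N → ℝ) (i j : Fin N) : ℝ := (ρ i + ρ j) / 2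

lemma Lcost_anti {x₁ x₂ : ℝ} (y : ℝ) (h0 : 0 ≤ x₁) (h : x₁ ≤ x₂) :
    Lcost x₂ y ≤ Lcost x₁ y := by
  rcases lt_or_eq_of_le h0 with hx | hx
  · have hx₂ : 0 < x₂ := lt_of_lt_of_le hx h
    simp only [Lcost, if_pos hx, if_pos hx₂]
    exact ENNReal.ofReal_le_ofReal (div_le_div_of_nonneg_left (sq_nonneg y) hx h)
  · rcases eq_or_ne y 0 with hy | hy
    · subst hy
      have : Lcost x₁ 0 = 0 := by simp [Lcost, ← hx]
      rw [this]
      rcases lt_or_eq_of_le (hx ▸ h) with h2 | h2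
      · simp [Lcost, if_pos h2]
      · simp [Lcost, ← h2]
    · have : Lcost x₁ y = ⊤ := by simp [Lcost, ← hx, hy]
      simp [this]

lemma sq_div_convex {x₁ y₁ x₂ y₂ t : ℝ} (hx₁ : 0 < x₁) (hx₂ : 0 < x₂)
    (ht0 : 0 ≤ t) (ht1 : t ≤ 1) :
    (t * y₁ + (1 - t) * y₂) ^ 2 / (t * x₁ + (1 - t) * x₂)
      ≤ t * (y₁ ^ 2 / x₁) + (1 - t) * (y₂ ^ 2 / x₂) := by
  have hxt : 0 < t * x₁ + (1 - t) * x₂ := by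
    rcases lt_or_eq_of_le ht0 with h | h
    · nlinarith [mul_pos h hx₁, mul_nonneg (sub_nonneg.2 ht1) hx₂.le]
    · rw [← h]; simpa using hx₂
  rw [div_le_iff₀ hxt]
  have e1 : (t * (y₁ ^ 2 / x₁) + (1 - t) * (y₂ ^ 2 / x₂)) * (t * x₁ + (1 - t) * x₂)
      = t^2 * y₁^2 + (1-t)^2 * y₂^2 + t*(1-t)*((y₁^2/x₁)*x₂ + (y₂^2/x₂)*x₁) := by
    field_simp
    ring
  have key2 : 2*y₁*y₂ ≤ y₁^2/x₁*x₂ + y₂^2/x₂*x₁ := by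
    rw [div_mul_eq_mul_div, div_mul_eq_mul_div,
      div_add_div _ _ (ne_of_gt hx₁) (ne_of_gt hx₂), le_div_iff₀ (mul_pos hx₁ hx₂)]
    nlinarith [sq_nonneg (y₁*x₂ - y₂*x₁)]
  have htm : 0 ≤ t * (1 - t) := mul_nonneg ht0 (by linarith)
  have key3 := mul_le_mul_of_nonneg_left key2 htm
  rw [e1]; nlinarith [key3]

lemma Lcost_convex {x₁ y₁ x₂ y₂ t : ℝ} (hx₁ : 0 ≤ x₁) (hx₂ : 0 ≤ x₂)
    (ht0 : 0 ≤ t) (ht1 : t ≤ 1) :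
    Lcost (t * x₁ + (1 - t) * x₂) (t * y₁ + (1 - t) * y₂)
      ≤ ENNReal.ofReal t * Lcost x₁ y₁ + ENNReal.ofReal (1 - t) * Lcost x₂ y₂ := by
  rcases eq_or_lt_of_le ht0 with h0 | h0
  · subst h0
    simp [Lcost]
  rcases eq_or_lt_of_le ht1 with h1 | h1
  · subst h1
    simp [Lcost]
  have h1' : 0 < 1 - t := by linarith
  rcases lt_or_eq_of_le hx₁ with hp₁ | hz₁
  · rcases lt_or_eq_of_le hx₂ with hp₂ | hz₂
    · -- both positive : the main case
      have hxt : 0 < t * x₁ + (1 - t) * x₂ := by positivity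
      rw [Lcost, if_pos hxt, Lcost, if_pos hp₁, Lcost, if_pos hp₂,
        ← ENNReal.ofReal_mul ht0, ← ENNReal.ofReal_mul h1'.le,
        ← ENNReal.ofReal_add (by positivity) (by positivity)]
      exact ENNReal.ofReal_le_ofReal (sq_div_convex hp₁ hp₂ ht0 ht1)
    · -- x₂ = 0
      subst hz₂
      rcases eq_or_ne y₂ 0 with hy₂ | hy₂
      · subst hy₂
        simp only [mul_zero, add_zero]
        have e : Lcost 0 0 = 0 := by simp [Lcost]
        rw [e, mul_zero, add_zero]
        have hxt : 0 < t * x₁ := mul_pos h0 hp₁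
        rw [Lcost, if_pos hxt, Lcost, if_pos hp₁, ← ENNReal.ofReal_mul ht0]
        apply le_of_eq
        congr 1
        field_simp
      · have e : Lcost 0 y₂ = ⊤ := by simp [Lcost, hy₂]
        rw [e, ENNReal.mul_top (by simp [h1] : ENNReal.ofReal (1-t) ≠ 0)]
        simp
  · -- x₁ = 0
    subst hz₁
    rcases eq_or_ne y₁ 0 with hy₁ | hy₁
    · subst hy₁
      simp only [mul_zero, zero_add]
      have e : Lcost 0 0 = 0 := by simp [Lcost]
      rw [e, mul_zero, zero_add]
      rcases lt_or_eq_of_le hx₂ with hp₂ | hz₂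
      · have hxt : 0 < (1 - t) * x₂ := mul_pos h1' hp₂
        rw [Lcost, if_pos hxt, Lcost, if_pos hp₂, ← ENNReal.ofReal_mul h1'.le]
        apply le_of_eq
        congr 1
        field_simp
      · subst hz₂
        rcases eq_or_ne y₂ 0 with hy₂ | hy₂
        · simp [Lcost, hy₂]
        · have htop : ENNReal.ofReal (1-t) * ⊤ = ⊤ := ENNReal.mul_top (by simp [h1])
          simp [Lcost, hy₂, h1'.ne', htop]
    · have e : Lcost 0 y₁ = ⊤ := by simp [Lcost, hy₁]
      rw [e, ENNReal.mul_top (by simp [h0] : ENNReal.ofReal t ≠ 0)]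
      simp


/-- If `Θ : [0,∞)² → [0,∞)` is concave, then `(a,b,y) ↦ L(Θ(a,b), y)` is convex on
`[0,∞) × [0,∞) × ℝ`; in particular, for `θ_ij(ρ) = (ρ_i + ρ_j)/2` the action
integrand `(ρ,m) ↦ ∑_{(i,j)∈E} L(θ_ij(ρ), m_ij)` is convex on
`{ρ : ρ_i ≥ 0} × ℝ^{N×N}`. -/
theorem action_integrand_convex
    (Θ : ℝ → ℝ → ℝ)
    (hΘnn : ∀ a b : ℝ, 0 ≤ a → 0 ≤ b → 0 ≤ Θ a b)
    (hΘconc : ConcaveOn ℝ {p : ℝ × ℝ | 0 ≤ p.1 ∧ 0 ≤ p.2} (fun p => Θ p.1 p.2))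
    (N : ℕ) (E : Fin N → Fin N → Prop) [DecidableRel E] :
    (∀ a₁ b₁ y₁ a₂ b₂ y₂ : ℝ, 0 ≤ a₁ → 0 ≤ b₁ → 0 ≤ a₂ → 0 ≤ b₂ →
      ∀ t : ℝ, 0 ≤ t → t ≤ 1 →
      Lcost (Θ (t * a₁ + (1 - t) * a₂) (t * b₁ + (1 - t) * b₂)) (t * y₁ + (1 - t) * y₂)
        ≤ ENNReal.ofReal t * Lcost (Θ a₁ b₁) y₁
          + ENNReal.ofReal (1 - t) * Lcost (Θ a₂ b₂) y₂) ∧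
    (∀ (ρ₁ ρ₂ : Fin N → ℝ) (m₁ m₂ : Fin N → Fin N → ℝ),
      (∀ i, 0 ≤ ρ₁ i) → (∀ i, 0 ≤ ρ₂ i) →
      ∀ t : ℝ, 0 ≤ t → t ≤ 1 →
      (∑ i, ∑ j, if E i j then
          Lcost (thetaA (fun k => t * ρ₁ k + (1 - t) * ρ₂ k) i j)
            (t * m₁ i j + (1 - t) * m₂ i j) else 0)
        ≤ ENNReal.ofReal t *
            (∑ i, ∑ j, if E i j then Lcost (thetaA ρ₁ i j) (m₁ i j) else 0)
          + ENNReal.ofReal (1 - t) *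
            (∑ i, ∑ j, if E i j then Lcost (thetaA ρ₂ i j) (m₂ i j) else 0)) := by
  constructor
  · intro a₁ b₁ y₁ a₂ b₂ y₂ ha₁ hb₁ ha₂ hb₂ t ht0 ht1
    have hm : t * Θ a₁ b₁ + (1 - t) * Θ a₂ b₂
        ≤ Θ (t * a₁ + (1 - t) * a₂) (t * b₁ + (1 - t) * b₂) := by
      have := hΘconc.2 (show ((a₁, b₁) : ℝ × ℝ) ∈ _ from ⟨ha₁, hb₁⟩)
        (show ((a₂, b₂) : ℝ × ℝ) ∈ _ from ⟨ha₂, hb₂⟩) ht0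
        (show (0:ℝ) ≤ 1 - t by linarith) (by ring)
      simpa [Prod.smul_mk, smul_eq_mul] using this
    have hnn : 0 ≤ t * Θ a₁ b₁ + (1 - t) * Θ a₂ b₂ :=
      add_nonneg (mul_nonneg ht0 (hΘnn _ _ ha₁ hb₁))
        (mul_nonneg (by linarith) (hΘnn _ _ ha₂ hb₂))
    calc Lcost (Θ (t * a₁ + (1 - t) * a₂) (t * b₁ + (1 - t) * b₂)) (t * y₁ + (1 - t) * y₂)
        ≤ Lcost (t * Θ a₁ b₁ + (1 - t) * Θ a₂ b₂) (t * y₁ + (1 - t) * y₂) :=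
          Lcost_anti _ hnn hm
      _ ≤ _ := Lcost_convex (hΘnn _ _ ha₁ hb₁) (hΘnn _ _ ha₂ hb₂) ht0 ht1
  · intro ρ₁ ρ₂ m₁ m₂ hρ₁ hρ₂ t ht0 ht1
    have key : ∀ i j : Fin N,
        (if E i j then
          Lcost (thetaA (fun k => t * ρ₁ k + (1 - t) * ρ₂ k) i j)
            (t * m₁ i j + (1 - t) * m₂ i j) else 0)
        ≤ ENNReal.ofReal t * (if E i j then Lcost (thetaA ρ₁ i j) (m₁ i j) else 0)
          + ENNReal.ofReal (1 - t) *
              (if E i j then Lcost (thetaA ρ₂ i j) (m₂ i j) else 0) := by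
      intro i j
      by_cases h : E i j
      · simp only [if_pos h]
        have e : thetaA (fun k => t * ρ₁ k + (1 - t) * ρ₂ k) i j
            = t * thetaA ρ₁ i j + (1 - t) * thetaA ρ₂ i j := by
          unfold thetaA; ring
        rw [e]
        exact Lcost_convex
          (div_nonneg (add_nonneg (hρ₁ i) (hρ₁ j)) (by norm_num))
          (div_nonneg (add_nonneg (hρ₂ i) (hρ₂ j)) (by norm_num)) ht0 ht1
      · simp [h]
    refine le_trans
      (Finset.sum_le_sum (fun i _ => Finset.sum_le_sum (fun j _ => key i j)))
      (le_of_eq ?_)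
    simp only [Finset.sum_add_distrib, Finset.mul_sum]


end
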